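/- Synchronous FL gradient-descent bound: let f = ∑_i λ_i f_i with ∑_i λ_i = 1, λ_i ≥ 0, each f_i μ-strongly convex and L-smooth, w^* the minimizer of f, w_i^* the minimizer of f_i with ‖w_i^* - w^*‖² ≤ φ², and ‖w^t - w^*‖² ≤ R² for all iterates of w^{t+1} = w^t - η∇f(w^t). If the per-iteration bound f(w^{t+1}) - f(w^*) ≤ R²/(2ηT) · (contribution of t) plus heterogeneity terms holds as in the paper, then the running average ŵ(T) = (1/T)∑_{t=1}^T w^{t+1} satisfies f(ŵ(T)) - f(w^*) ≤ R²/(2ηT) + (2L/(μT²))[L R² + (μ + L)φ²]. -/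

import Mathlib

/-!
Gradient descent on a convex `L`-smooth function with step `η ≤ 1 / L` satisfies, for every
comparison point `z`, the one-step bound
`f (w (t+1)) - f z ≤ (‖w t - z‖² - ‖w (t+1) - z‖²) / (2η)`: smoothness gives the sufficient
decrease `f (w (t+1)) ≤ f (w t) - η/2 ‖∇f (w t)‖²`, and convexity at `w t` turns this into the
difference of squared distances. Summed over `t`, the right-hand side telescopes to at most
`‖w 1 - z‖² / (2η) ≤ R² / (2η)`, and Jensen's inequality transfers the average of the values to
the value at the averaged iterate. The aggregate `f = ∑ λᵢ fᵢ` inherits convexity and smoothness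
from the `fᵢ`; the heterogeneity term of the bound is nonnegative slack.
-/

open scoped RealInnerProductSpace
open Finset

section GradientDescent

variable {H : Type*} [NormedAddCommGroup H] [InnerProductSpace ℝ H]

theorem inner_weighted_sum_add {ι : Type*} [Fintype ι] {lam : ι → ℝ} (hlam1 : ∑ i, lam i = 1)
    (G : ι → H) (v : H) (c : ℝ) :
    ⟪∑ i, lam i • G i, v⟫ + c = ∑ i, lam i * (⟪G i, v⟫ + c) := by
  simp only [sum_inner, real_inner_smul_left, mul_add, sum_add_distrib, ← sum_mul, hlam1, one_mul]

theorem inner_add_le_weighted_sum_sub {ι : Type*} [Fintype ι] {lam : ι → ℝ}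
    (hlam0 : ∀ i, 0 ≤ lam i) (hlam1 : ∑ i, lam i = 1) {F : ι → H → ℝ} {G : ι → H → H} {c : ℝ}
    (hF : ∀ i x y, ⟪G i y, x - y⟫ + c / 2 * ‖x - y‖ ^ 2 ≤ F i x - F i y) (x y : H) :
    ⟪∑ i, lam i • G i y, x - y⟫ + c / 2 * ‖x - y‖ ^ 2 ≤
      ∑ i, lam i * F i x - ∑ i, lam i * F i y := by
  rw [inner_weighted_sum_add hlam1, ← sum_sub_distrib]
  simp_rw [← mul_sub]
  exact sum_le_sum fun i _ => mul_le_mul_of_nonneg_left (hF i x y) (hlam0 i)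

theorem weighted_sum_sub_le_inner_add {ι : Type*} [Fintype ι] {lam : ι → ℝ}
    (hlam0 : ∀ i, 0 ≤ lam i) (hlam1 : ∑ i, lam i = 1) {F : ι → H → ℝ} {G : ι → H → H} {c : ℝ}
    (hF : ∀ i x y, F i x - F i y ≤ ⟪G i y, x - y⟫ + c / 2 * ‖x - y‖ ^ 2) (x y : H) :
    ∑ i, lam i * F i x - ∑ i, lam i * F i y ≤
      ⟪∑ i, lam i • G i y, x - y⟫ + c / 2 * ‖x - y‖ ^ 2 := by
  rw [inner_weighted_sum_add hlam1, ← sum_sub_distrib]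
  simp_rw [← mul_sub]
  exact sum_le_sum fun i _ => mul_le_mul_of_nonneg_left (hF i x y) (hlam0 i)

theorem convexOn_univ_of_inner_le_sub {f : H → ℝ} {g : H → H}
    (hconv : ∀ x y, ⟪g y, x - y⟫ ≤ f x - f y) : ConvexOn ℝ Set.univ f := by
  refine ⟨convex_univ, fun x _ y _ a b ha hb hab => ?_⟩
  set z := a • x + b • y
  have hz : a * ⟪g z, x - z⟫ + b * ⟪g z, y - z⟫ = 0 := by
    rw [← real_inner_smul_right, ← real_inner_smul_right, ← inner_add_right]
    have : a • (x - z) + b • (y - z) = 0 := by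
      rw [smul_sub, smul_sub, sub_add_sub_comm, ← add_smul, hab, one_smul, sub_self]
    rw [this, inner_zero_right]
  have hfz : f z = a * f z + b * f z := by rw [← add_mul, hab, one_mul]
  simp only [smul_eq_mul]
  linarith [mul_le_mul_of_nonneg_left (hconv x z) ha, mul_le_mul_of_nonneg_left (hconv y z) hb]

variable {f : H → ℝ} {g : H → H} {L η : ℝ}

theorem le_sub_of_gradient_step
    (hsm : ∀ x y, f x - f y ≤ ⟪g y, x - y⟫ + L / 2 * ‖x - y‖ ^ 2)
    (hη : 0 ≤ η) (hηL : η * L ≤ 1) (x : H) :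
    f (x - η • g x) ≤ f x - η / 2 * ‖g x‖ ^ 2 := by
  have h := hsm (x - η • g x) x
  rw [sub_sub_cancel_left, inner_neg_right, real_inner_smul_right, real_inner_self_eq_norm_sq,
    norm_neg, norm_smul, Real.norm_eq_abs, mul_pow, sq_abs] at h
  nlinarith [mul_le_mul_of_nonneg_left hηL (mul_nonneg hη (sq_nonneg ‖g x‖))]

theorem norm_sub_sq_sub_norm_step_sub_sq (x z v : H) (η : ℝ) :
    ‖x - z‖ ^ 2 - ‖x - η • v - z‖ ^ 2 = 2 * η * ⟪v, x - z⟫ - η ^ 2 * ‖v‖ ^ 2 := by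
  rw [sub_right_comm x (η • v) z, norm_sub_sq_real (x - z), real_inner_smul_right,
    real_inner_comm, norm_smul, Real.norm_eq_abs, mul_pow, sq_abs]
  ring

theorem gradient_step_sub_le (hconv : ∀ x y, ⟪g y, x - y⟫ ≤ f x - f y)
    (hsm : ∀ x y, f x - f y ≤ ⟪g y, x - y⟫ + L / 2 * ‖x - y‖ ^ 2)
    (hη : 0 < η) (hηL : η * L ≤ 1) (x z : H) :
    f (x - η • g x) - f z ≤ (‖x - z‖ ^ 2 - ‖x - η • g x - z‖ ^ 2) / (2 * η) := by
  have hdec := le_sub_of_gradient_step hsm hη.le hηL x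
  have hcv := hconv z x
  rw [← neg_sub x z, inner_neg_right] at hcv
  rw [norm_sub_sq_sub_norm_step_sub_sq, le_div_iff₀ (by positivity)]
  nlinarith

theorem sum_Icc_sub_succ {M : Type*} [AddCommGroup M] (a : ℕ → M) {T : ℕ} (hT : 1 ≤ T) :
    ∑ t ∈ Icc 1 T, (a t - a (t + 1)) = a 1 - a (T + 1) := by
  simpa only [neg_sub_neg] using sum_Icc_sub hT (fun t => -a t)

variable {w : ℕ → H} (hconv : ∀ x y, ⟪g y, x - y⟫ ≤ f x - f y)
  (hsm : ∀ x y, f x - f y ≤ ⟪g y, x - y⟫ + L / 2 * ‖x - y‖ ^ 2)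
  (hη : 0 < η) (hηL : η * L ≤ 1) (hupd : ∀ t, w (t + 1) = w t - η • g (w t))
include hconv hsm hη hηL hupd

theorem gradientDescent_sum_sub_le (z : H) {T : ℕ} (hT : 1 ≤ T) :
    ∑ t ∈ Icc 1 T, (f (w (t + 1)) - f z) ≤ ‖w 1 - z‖ ^ 2 / (2 * η) :=
  calc ∑ t ∈ Icc 1 T, (f (w (t + 1)) - f z)
      ≤ ∑ t ∈ Icc 1 T, (‖w t - z‖ ^ 2 - ‖w (t + 1) - z‖ ^ 2) / (2 * η) :=
        sum_le_sum fun t _ => by rw [hupd]; exact gradient_step_sub_le hconv hsm hη hηL _ z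
    _ = (‖w 1 - z‖ ^ 2 - ‖w (T + 1) - z‖ ^ 2) / (2 * η) := by
        rw [← sum_div, sum_Icc_sub_succ (fun t => ‖w t - z‖ ^ 2) hT]
    _ ≤ ‖w 1 - z‖ ^ 2 / (2 * η) := by gcongr; exact sub_le_self _ (sq_nonneg _)

theorem gradientDescent_average_sub_le (z : H) {T : ℕ} (hT : 1 ≤ T) :
    f ((T : ℝ)⁻¹ • ∑ t ∈ Icc 1 T, w (t + 1)) - f z ≤ ‖w 1 - z‖ ^ 2 / (2 * η * T) := by
  have hTpos : (0 : ℝ) < T := by exact_mod_cast hT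
  have hcard : ((Icc 1 T).card : ℝ) = T := by simp
  have hjensen : f ((T : ℝ)⁻¹ • ∑ t ∈ Icc 1 T, w (t + 1)) ≤
      ∑ t ∈ Icc 1 T, (T : ℝ)⁻¹ • f (w (t + 1)) := by
    rw [smul_sum]
    refine (convexOn_univ_of_inner_le_sub hconv).map_sum_le (fun _ _ => by positivity) ?_
      fun _ _ => Set.mem_univ _
    rw [sum_const, nsmul_eq_mul, hcard, mul_inv_cancel₀ hTpos.ne']
  have hsum := gradientDescent_sum_sub_le hconv hsm hη hηL hupd z hT
  rw [sum_sub_distrib, sum_const, nsmul_eq_mul, hcard] at hsum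
  simp only [smul_eq_mul, ← mul_sum] at hjensen
  have hjensen' := mul_le_mul_of_nonneg_left hjensen hTpos.le
  rw [← mul_assoc, mul_inv_cancel₀ hTpos.ne', one_mul] at hjensen'
  rw [← div_div, le_div_iff₀ hTpos]
  linarith

end GradientDescent

theorem sfl_convergence_bound_general
    {H : Type*} [NormedAddCommGroup H] [InnerProductSpace ℝ H]
    (N : ℕ) (lam : Fin N → ℝ)
    (hlam0 : ∀ i, 0 ≤ lam i) (hlam1 : ∑ i, lam i = 1)
    (fi : Fin N → H → ℝ) (gradfi : Fin N → H → H)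
    (μ L η R φ : ℝ) (hμ : 0 < μ) (hμL : μ ≤ L) (hη : 0 < η) (hηL : η * L ≤ 1)
    (hsc : ∀ i, ∀ x y : H,
      fi i x - fi i y ≥ ⟪gradfi i y, x - y⟫ + μ / 2 * ‖x - y‖ ^ 2)
    (hsm : ∀ i, ∀ x y : H,
      fi i x - fi i y ≤ ⟪gradfi i y, x - y⟫ + L / 2 * ‖x - y‖ ^ 2)
    (f : H → ℝ) (hf : ∀ x, f x = ∑ i, lam i * fi i x)
    (gradf : H → H) (hgradf : ∀ x, gradf x = ∑ i, lam i • gradfi i x)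
    (wstar : H)
    (w : ℕ → H)
    (hupd : ∀ t, w (t + 1) = w t - η • gradf (w t))
    (hR : ∀ t, ‖w t - wstar‖ ≤ R)
    (T : ℕ) (hT : 1 ≤ T)
    (what : H)
    (hwhat : what = (T : ℝ)⁻¹ • ∑ t ∈ Finset.Icc 1 T, w (t + 1)) :
    f what - f wstar ≤
      R ^ 2 / (2 * η * T) + 2 * L / (μ * T ^ 2) * (L * R ^ 2 + (μ + L) * φ ^ 2) := by
  have hconv : ∀ x y, ⟪gradf y, x - y⟫ ≤ f x - f y := fun x y => by
    have h := inner_add_le_weighted_sum_sub hlam0 hlam1 hsc x y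
    rw [← hgradf, ← hf, ← hf] at h
    exact (le_add_of_nonneg_right (by positivity)).trans h
  have hsmooth : ∀ x y, f x - f y ≤ ⟪gradf y, x - y⟫ + L / 2 * ‖x - y‖ ^ 2 := fun x y => by
    simpa only [← hgradf, ← hf] using weighted_sum_sub_le_inner_add hlam0 hlam1 hsm x y
  have havg := gradientDescent_average_sub_le hconv hsmooth hη hηL hupd wstar hT
  rw [← hwhat] at havg
  have hR1 : ‖w 1 - wstar‖ ^ 2 / (2 * η * T) ≤ R ^ 2 / (2 * η * T) := by
    gcongr
    exact hR 1
  have hL : 0 ≤ L := hμ.le.trans hμL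
  have hslack : 0 ≤ 2 * L / (μ * T ^ 2) * (L * R ^ 2 + (μ + L) * φ ^ 2) := by
    have : 0 ≤ L * R ^ 2 + (μ + L) * φ ^ 2 := by positivity
    positivity
  linarith

theorem sfl_convergence_bound
    {H : Type*} [NormedAddCommGroup H] [InnerProductSpace ℝ H]
    (N : ℕ) (lam : Fin N → ℝ)
    (hlam0 : ∀ i, 0 ≤ lam i) (hlam1 : ∑ i, lam i = 1)
    (fi : Fin N → H → ℝ) (gradfi : Fin N → H → H)
    (μ L η R φ : ℝ) (hμ : 0 < μ) (hμL : μ ≤ L) (hη : 0 < η) (hηL : η * L ≤ 1)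
    (hdiff : ∀ i, Differentiable ℝ (fi i))
    (hsc : ∀ i, ∀ x y : H,
      fi i x - fi i y ≥ ⟪gradfi i y, x - y⟫ + μ / 2 * ‖x - y‖ ^ 2)
    (hsm : ∀ i, ∀ x y : H,
      fi i x - fi i y ≤ ⟪gradfi i y, x - y⟫ + L / 2 * ‖x - y‖ ^ 2)
    (f : H → ℝ) (hf : ∀ x, f x = ∑ i, lam i * fi i x)
    (gradf : H → H) (hgradf : ∀ x, gradf x = ∑ i, lam i • gradfi i x)
    (wstar : H) (hwstar : ∀ x, f wstar ≤ f x)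
    (wistar : Fin N → H)
    (hwistar : ∀ i, ∀ x, fi i (wistar i) ≤ fi i x)
    (hhet : ∀ i, ‖wistar i - wstar‖ ≤ φ)
    (w : ℕ → H)
    (hupd : ∀ t, w (t + 1) = w t - η • gradf (w t))
    (hR : ∀ t, ‖w t - wstar‖ ≤ R)
    (T : ℕ) (hT : 1 ≤ T)
    (what : H)
    (hwhat : what = (T : ℝ)⁻¹ • ∑ t ∈ Finset.Icc 1 T, w (t + 1)) :
    f what - f wstar ≤
      R ^ 2 / (2 * η * T) + 2 * L / (μ * T ^ 2) * (L * R ^ 2 + (μ + L) * φ ^ 2) :=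
  sfl_convergence_bound_general N lam hlam0 hlam1 fi gradfi μ L η R φ hμ hμL hη hηL hsc hsm f hf
    gradf hgradf wstar w hupd hR T hT what hwhat
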